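/- arXiv:2512.01866 — 2 statements merged into one kernel-verified Lean document; each statement's English description precedes it below -/
import Mathlib

section
/- Let K be a differential field of characteristic 0 and let 𝔭 be a nonzero prime differential ideal of the differential polynomial ring K{T} admitting minimal polynomials. Then any two minimal polynomials of 𝔭 differ by multiplication by a nonzero scalar of K, and 𝔭 contains no nonzero differential polynomial of order strictly less than the order of a minimal polynomial. -/
/-!
Let `P` be a minimal polynomial of order `n` with separant `s`. Each derivative has the shape
`D^[m+1] P = s * X (n+m+1) + (terms in X 0, …, X (n+m))`, so the equations `D^[m+1] P = 0` can be
solved successively for `X (n+m+1)` in `K[X 0, …, X n][1/s]`. Specialising at that solution is the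
identity on `K[X 0, …, X n]` and sends `(P)_δ` into `(P)`; hence `s ^ k * Q ∈ (P)_δ` with `Q` of
order `≤ n` gives `P ∣ s ^ j * Q`, and so `P ∣ Q`, because `P` is prime and, having larger degree
in `X n`, does not divide `s`.

So a nonzero element of `𝔭` involving only `X 0, …, X (n-1)` would be a multiple of `P`, which
is impossible. Applied to two minimal polynomials this forces equal orders; then `P ∣ P₁` with `P₁`
irreducible, so `P₁` is `P` times a unit of `K{T}`, i.e. a nonzero constant.
-/

open MvPolynomial

namespace MvPolynomial

variable {R σ : Type*}

section CommSemiring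

variable [CommSemiring R]

lemma pderiv_mem_supported {s : Set σ} {p : MvPolynomial σ R} (hp : p ∈ supported R s)
    (i : σ) : pderiv i p ∈ supported R s := by
  classical
  induction hp using Algebra.adjoin_induction with
  | mem _ hx =>
    obtain ⟨j, -, rfl⟩ := hx
    rw [pderiv_X, Pi.single_apply]
    split_ifs
    exacts [one_mem _, zero_mem _]
  | algebraMap c => simp [algebraMap_eq]
  | add p q _ _ hp hq => rw [map_add]; exact add_mem hp hq
  | mul p q hp' hq' hp hq => rw [pderiv_mul]; exact add_mem (mul_mem hp hq') (mul_mem hp' hq)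

lemma X_mem_supported_of_mem {s : Set σ} {i : σ} (hi : i ∈ s) :
    (X i : MvPolynomial σ R) ∈ supported R s :=
  Algebra.subset_adjoin (Set.mem_image_of_mem X hi)

lemma aeval_congr_of_mem_supported {S : Type*} [CommSemiring S] [Algebra R S] {s : Set σ}
    {v w : σ → S} {p : MvPolynomial σ R} (hp : p ∈ supported R s) (h : ∀ i ∈ s, v i = w i) :
    aeval v p = aeval w p :=
  eval₂Hom_congr' rfl (fun i hi _ => h i (mem_supported.mp hp hi)) rfl

lemma degreeOf_pderiv_lt {i : σ} {p : MvPolynomial σ R} (h : i ∈ p.vars) :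
    degreeOf i (pderiv i p) < degreeOf i p := by
  rw [degreeOf_lt_iff (Nat.pos_of_ne_zero (mem_vars_iff_degreeOf_ne_zero.mp h))]
  intro m hm
  have hcoeff : coeff (m + Finsupp.single i 1) p ≠ 0 := by
    rw [mem_support_iff, coeff_pderiv] at hm
    exact left_ne_zero_of_mul hm
  have := monomial_le_degreeOf i (mem_support_iff.mpr hcoeff)
  simp only [Finsupp.add_apply, Finsupp.single_eq_same] at this
  omega

lemma pderiv_ne_zero_of_mem_vars [NoZeroDivisors R] [CharZero R] {i : σ}
    {p : MvPolynomial σ R} (h : i ∈ p.vars) : pderiv i p ≠ 0 := by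
  obtain ⟨m, hm, hmi⟩ := (mem_vars_iff_mem_support i).mp h
  have hle : Finsupp.single i 1 ≤ m :=
    Finsupp.single_le_iff.mpr (Nat.one_le_iff_ne_zero.mpr (Finsupp.mem_support_iff.mp hmi))
  intro h0
  have := coeff_pderiv (i := i) p (m - Finsupp.single i 1)
  rw [h0, coeff_zero, tsub_add_cancel_of_le hle] at this
  exact mul_ne_zero (mem_support_iff.mp hm) (Nat.cast_add_one_ne_zero _) this.symm

end CommSemiring

section IsDomain

variable [CommRing R] [IsDomain R]

lemma not_dvd_pderiv [CharZero R] {i : σ} {p : MvPolynomial σ R} (h : i ∈ p.vars) :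
    ¬ p ∣ pderiv i p := by
  rintro ⟨r, hr⟩
  have hs := pderiv_ne_zero_of_mem_vars h
  rw [hr] at hs
  have hdeg := degreeOf_pderiv_lt h
  rw [hr, degreeOf_mul_eq (left_ne_zero_of_mul hs) (right_ne_zero_of_mul hs)] at hdeg
  omega

lemma mem_vars_of_dvd {i : σ} {p q : MvPolynomial σ R} (hq : q ≠ 0) (hpq : p ∣ q)
    (h : i ∈ p.vars) : i ∈ q.vars := by
  obtain ⟨r, rfl⟩ := hpq
  rw [mem_vars_iff_degreeOf_ne_zero] at h ⊢
  rw [degreeOf_mul_eq (left_ne_zero_of_mul hq) (right_ne_zero_of_mul hq)]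
  omega

end IsDomain

section GenericZero

variable [CommRing R]

/-- When `G (m + 1) = s * X (n + m + 1) + (terms in X 0, …, X (n + m))` for all `m`, this is the
point of `Localization.Away s` which keeps `X i` for `i ≤ n` and at which every `G (m + 1)`
vanishes: its coordinate `n + m + 1` is obtained by solving `G (m + 1) = 0`, the coordinates
already found being substituted for the lower variables. -/
noncomputable def genericZero (s : MvPolynomial ℕ R) (n : ℕ) (G : ℕ → MvPolynomial ℕ R) :
    ℕ → Localization.Away s
  | i =>
    if i ≤ n then algebraMap (MvPolynomial ℕ R) (Localization.Away s) (X i)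
    else -IsLocalization.Away.invSelf s *
      aeval (R := R) (fun j => if j < i then genericZero s n G j else 0) (G (i - n) - s * X i)

variable {s : MvPolynomial ℕ R} {n : ℕ} {G : ℕ → MvPolynomial ℕ R}

lemma genericZero_of_le {i : ℕ} (hi : i ≤ n) :
    genericZero s n G i = algebraMap (MvPolynomial ℕ R) (Localization.Away s) (X i) := by
  rw [genericZero, if_pos hi]

lemma aeval_genericZero_of_mem_supported {Q : MvPolynomial ℕ R}
    (hQ : Q ∈ supported R (Set.Iic n)) :
    aeval (genericZero s n G) Q = algebraMap (MvPolynomial ℕ R) (Localization.Away s) Q := by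
  refine hom_congr_vars (p₁ := Q) (f₂ := algebraMap _ _) ?_ (fun i hi _ => ?_) rfl
  · ext c
    simp [IsScalarTower.algebraMap_apply R (MvPolynomial ℕ R) (Localization.Away s)]
  · simpa using genericZero_of_le (mem_supported.mp hQ hi)

lemma aeval_genericZero_eq_zero (hs : s ∈ supported R (Set.Iic n)) {m : ℕ}
    (hG : G (m + 1) - s * X (n + m + 1) ∈ supported R (Set.Iic (n + m))) :
    aeval (genericZero s n G) (G (m + 1)) = 0 := by
  set A := G (m + 1) - s * X (n + m + 1)
  have hX : genericZero s n G (n + m + 1) =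
      -IsLocalization.Away.invSelf s * aeval (genericZero s n G) A := by
    rw [genericZero, if_neg (by omega), show n + m + 1 - n = m + 1 by omega]
    congr 1
    exact aeval_congr_of_mem_supported hG fun i hi => if_pos (Nat.lt_succ_of_le hi)
  calc aeval (genericZero s n G) (G (m + 1))
      = aeval (genericZero s n G) (A + s * X (n + m + 1)) := by rw [sub_add_cancel]
    _ = aeval (genericZero s n G) A *
          (1 - algebraMap _ _ s * IsLocalization.Away.invSelf s) := by
      rw [map_add, map_mul, aeval_X, hX, aeval_genericZero_of_mem_supported hs]
      ring
    _ = 0 := by rw [IsLocalization.Away.mul_invSelf, sub_self, mul_zero]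

theorem exists_dvd_pow_mul_of_mem_span_range (hs : s ∈ supported R (Set.Iic n))
    (hG₀ : G 0 ∈ supported R (Set.Iic n))
    (hG : ∀ m, G (m + 1) - s * X (n + m + 1) ∈ supported R (Set.Iic (n + m)))
    {Q : MvPolynomial ℕ R} (hQ : Q ∈ supported R (Set.Iic n))
    (hmem : Q ∈ Ideal.span (Set.range G)) : ∃ j, G 0 ∣ s ^ j * Q := by
  let L := Localization.Away s
  have hspan : Ideal.span (Set.range G) ≤
      (Ideal.map (algebraMap _ L) (Ideal.span {G 0})).comap (aeval (genericZero s n G)) := by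
    rw [Ideal.span_le]
    rintro _ ⟨m | m, rfl⟩
    · rw [SetLike.mem_coe, Ideal.mem_comap, aeval_genericZero_of_mem_supported hG₀]
      exact Ideal.mem_map_of_mem _ (Ideal.mem_span_singleton_self _)
    · rw [SetLike.mem_coe, Ideal.mem_comap, aeval_genericZero_eq_zero hs (hG m)]
      exact zero_mem _
  have hQL := hspan hmem
  rw [Ideal.mem_comap, aeval_genericZero_of_mem_supported hQ,
    IsLocalization.algebraMap_mem_map_algebraMap_iff (Submonoid.powers s)] at hQL
  obtain ⟨_, ⟨j, rfl⟩, hj⟩ := hQL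
  exact ⟨j, Ideal.mem_span_singleton.mp hj⟩

end GenericZero

end MvPolynomial

structure IsDiffPolyDerivation {K : Type*} [CommRing K] (δ : K → K)
    (D : MvPolynomial ℕ K → MvPolynomial ℕ K) : Prop where
  map_add : ∀ p q, D (p + q) = D p + D q
  map_mul : ∀ p q, D (p * q) = D p * q + p * D q
  map_C : ∀ c : K, D (C c) = C (δ c)
  map_X : ∀ i : ℕ, D (X i) = X (i + 1)

namespace IsDiffPolyDerivation

variable {K : Type*} [CommRing K] {δ : K → K} {D : MvPolynomial ℕ K → MvPolynomial ℕ K}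

lemma sub_pderiv_mul_X_mem_supported (hD : IsDiffPolyDerivation δ D) {N : ℕ}
    {p : MvPolynomial ℕ K} (hp : p ∈ supported K (Set.Iic N)) :
    D p - pderiv N p * X (N + 1) ∈ supported K (Set.Iic N) := by
  induction hp using Algebra.adjoin_induction with
  | mem _ hx =>
    obtain ⟨i, hi, rfl⟩ := hx
    rcases (Set.mem_Iic.mp hi).lt_or_eq with hi | rfl
    · rw [hD.map_X, pderiv_X_of_ne hi.ne, zero_mul, sub_zero]
      exact X_mem_supported_of_mem hi
    · rw [hD.map_X, pderiv_X_self, one_mul, sub_self]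
      exact zero_mem _
  | algebraMap c =>
    rw [algebraMap_eq, hD.map_C, pderiv_C, zero_mul, sub_zero]
    exact Subalgebra.algebraMap_mem _ _
  | add p q _ _ hp hq =>
    rw [hD.map_add, (pderiv N).map_add]
    convert add_mem hp hq using 1
    ring
  | mul p q hp' hq' hp hq =>
    rw [hD.map_mul, pderiv_mul]
    convert add_mem (mul_mem hp hq') (mul_mem hp' hq) using 1
    ring

lemma mem_supported_succ (hD : IsDiffPolyDerivation δ D) {N : ℕ}
    {p : MvPolynomial ℕ K} (hp : p ∈ supported K (Set.Iic N)) :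
    D p ∈ supported K (Set.Iic (N + 1)) := by
  have hle := supported_mono (R := K) (Set.Iic_subset_Iic.mpr N.le_succ)
  rw [← sub_add_cancel (D p) (pderiv N p * X (N + 1))]
  exact add_mem (hle (hD.sub_pderiv_mul_X_mem_supported hp))
    (mul_mem (hle (pderiv_mem_supported hp N)) (X_mem_supported_of_mem Set.self_mem_Iic))

lemma iterate_sub_pderiv_mul_X_mem_supported (hD : IsDiffPolyDerivation δ D) {n : ℕ}
    {P : MvPolynomial ℕ K} (hP : P ∈ supported K (Set.Iic n)) (m : ℕ) :
    D^[m + 1] P - pderiv n P * X (n + m + 1) ∈ supported K (Set.Iic (n + m)) := by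
  induction m with
  | zero => simpa using hD.sub_pderiv_mul_X_mem_supported hP
  | succ m ih =>
    obtain ⟨A, hA, hsplit⟩ : ∃ A ∈ supported K (Set.Iic (n + m)),
        D^[m + 1] P = A + pderiv n P * X (n + m + 1) := ⟨_, ih, (sub_add_cancel _ _).symm⟩
    have hle := supported_mono (R := K) (Set.Iic_subset_Iic.mpr (by omega : n + 1 ≤ n + (m + 1)))
    have hD_A : D^[m + 1 + 1] P - pderiv n P * X (n + (m + 1) + 1) =
        D A + D (pderiv n P) * X (n + m + 1) := by
      rw [Function.iterate_succ_apply', hsplit, hD.map_add, hD.map_mul, hD.map_X,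
        show n + (m + 1) + 1 = n + m + 1 + 1 from rfl]
      ring
    rw [hD_A]
    exact add_mem (hD.mem_supported_succ hA)
      (mul_mem (hle (hD.mem_supported_succ (pderiv_mem_supported hP n)))
        (X_mem_supported_of_mem (Set.mem_Iic.mpr (by omega))))

end IsDiffPolyDerivation

structure IsMinimalPolynomial {K : Type*} [Field K] (D : MvPolynomial ℕ K → MvPolynomial ℕ K)
    (𝔭 : Ideal (MvPolynomial ℕ K)) (P : MvPolynomial ℕ K) (n : ℕ) : Prop where
  irreducible : Irreducible P
  vars_le : ∀ i ∈ P.vars, i ≤ n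
  mem_vars : n ∈ P.vars
  mem_iff : ∀ Q, Q ∈ 𝔭 ↔ ∃ k : ℕ, pderiv n P ^ k * Q ∈ Ideal.span (Set.range fun m => D^[m] P)

namespace IsMinimalPolynomial

variable {K : Type*} [Field K] {δ : K → K} {D : MvPolynomial ℕ K → MvPolynomial ℕ K}
  {𝔭 : Ideal (MvPolynomial ℕ K)} {P : MvPolynomial ℕ K} {n : ℕ}

lemma mem_supported_Iic (hP : IsMinimalPolynomial D 𝔭 P n) : P ∈ supported K (Set.Iic n) :=
  mem_supported.mpr hP.vars_le

lemma mem (hP : IsMinimalPolynomial D 𝔭 P n) : P ∈ 𝔭 :=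
  (hP.mem_iff P).mpr ⟨0, by rw [pow_zero, one_mul]; exact Ideal.subset_span ⟨0, rfl⟩⟩

lemma dvd_of_mem [CharZero K] (hP : IsMinimalPolynomial D 𝔭 P n) (hD : IsDiffPolyDerivation δ D)
    {Q : MvPolynomial ℕ K} (hQ : Q ∈ 𝔭) (hQn : Q ∈ supported K (Set.Iic n)) : P ∣ Q := by
  obtain ⟨k, hk⟩ := (hP.mem_iff Q).mp hQ
  have hs := pderiv_mem_supported hP.mem_supported_Iic n
  obtain ⟨j, hj⟩ := exists_dvd_pow_mul_of_mem_span_range (G := fun m => D^[m] P) hs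
    hP.mem_supported_Iic (hD.iterate_sub_pderiv_mul_X_mem_supported hP.mem_supported_Iic)
    (mul_mem (pow_mem hs k) hQn) hk
  rw [← mul_assoc, ← pow_add] at hj
  have hprime := hP.irreducible.prime
  exact (hprime.dvd_or_dvd hj).resolve_left
    fun h => not_dvd_pderiv hP.mem_vars (hprime.dvd_of_dvd_pow h)

lemma exists_mem_vars_le_of_mem [CharZero K] (hP : IsMinimalPolynomial D 𝔭 P n)
    (hD : IsDiffPolyDerivation δ D) {Q : MvPolynomial ℕ K} (hQ : Q ∈ 𝔭) (hQ0 : Q ≠ 0) :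
    ∃ i ∈ Q.vars, n ≤ i := by
  by_contra! hlt
  have hQn : Q ∈ supported K (Set.Iic n) := mem_supported.mpr fun i hi => (hlt i hi).le
  exact (hlt n (mem_vars_of_dvd hQ0 (hP.dvd_of_mem hD hQ hQn) hP.mem_vars)).false

lemma order_eq [CharZero K] {P₁ : MvPolynomial ℕ K} {n₁ : ℕ} (hP : IsMinimalPolynomial D 𝔭 P n)
    (hP₁ : IsMinimalPolynomial D 𝔭 P₁ n₁) (hD : IsDiffPolyDerivation δ D) : n = n₁ := by
  obtain ⟨i, hi, hni⟩ := hP.exists_mem_vars_le_of_mem hD hP₁.mem hP₁.irreducible.ne_zero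
  obtain ⟨i₁, hi₁, hni₁⟩ := hP₁.exists_mem_vars_le_of_mem hD hP.mem hP.irreducible.ne_zero
  have := hP.vars_le i₁ hi₁
  have := hP₁.vars_le i hi
  omega

lemma exists_eq_C_mul [CharZero K] {P₁ : MvPolynomial ℕ K} {n₁ : ℕ}
    (hP : IsMinimalPolynomial D 𝔭 P n) (hP₁ : IsMinimalPolynomial D 𝔭 P₁ n₁)
    (hD : IsDiffPolyDerivation δ D) : ∃ c : K, c ≠ 0 ∧ P₁ = C c * P := by
  obtain rfl := hP.order_eq hP₁ hD
  obtain ⟨u, hu⟩ := hP.dvd_of_mem hD hP₁.mem hP₁.mem_supported_Iic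
  have hunit := (hP₁.irreducible.isUnit_or_isUnit hu).resolve_left hP.irreducible.not_isUnit
  obtain ⟨c, hc, rfl⟩ := isUnit_iff_eq_C_of_isReduced.mp hunit
  exact ⟨c, hc.ne_zero, hu.trans (mul_comm _ _)⟩

end IsMinimalPolynomial

theorem minimal_polynomial_of_prime_differential_ideal_unique_general
    {K : Type*} [Field K] [CharZero K]
    (δ : K → K)
    (D : MvPolynomial ℕ K → MvPolynomial ℕ K)
    (hDadd : ∀ p q, D (p + q) = D p + D q)
    (hDmul : ∀ p q, D (p * q) = D p * q + p * D q)
    (hDC : ∀ c : K, D (MvPolynomial.C c) = MvPolynomial.C (δ c))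
    (hDX : ∀ i : ℕ, D (MvPolynomial.X i) = MvPolynomial.X (i + 1))
    (𝔭 : Ideal (MvPolynomial ℕ K))
    (P P₁ : MvPolynomial ℕ K) (n n₁ : ℕ)
    (hPirr : Irreducible P) (hP₁irr : Irreducible P₁)
    (hPord : (∀ i ∈ P.vars, i ≤ n) ∧ n ∈ P.vars)
    (hP₁ord : (∀ i ∈ P₁.vars, i ≤ n₁) ∧ n₁ ∈ P₁.vars)
    (hP : ∀ Q, Q ∈ 𝔭 ↔ ∃ k : ℕ,
      (MvPolynomial.pderiv n P) ^ k * Q ∈ Ideal.span (Set.range fun m => D^[m] P))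
    (hP₁ : ∀ Q, Q ∈ 𝔭 ↔ ∃ k : ℕ,
      (MvPolynomial.pderiv n₁ P₁) ^ k * Q ∈ Ideal.span (Set.range fun m => D^[m] P₁)) :
    (∃ c : K, c ≠ 0 ∧ P₁ = MvPolynomial.C c * P) ∧
    n = n₁ ∧
    ∀ Q ∈ 𝔭, Q ≠ 0 → ∃ i ∈ Q.vars, n ≤ i := by
  have hD : IsDiffPolyDerivation δ D := ⟨hDadd, hDmul, hDC, hDX⟩
  have hmin : IsMinimalPolynomial D 𝔭 P n := ⟨hPirr, hPord.1, hPord.2, hP⟩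
  have hmin₁ : IsMinimalPolynomial D 𝔭 P₁ n₁ := ⟨hP₁irr, hP₁ord.1, hP₁ord.2, hP₁⟩
  exact ⟨hmin.exists_eq_C_mul hmin₁ hD, hmin.order_eq hmin₁ hD,
    fun Q hQ hQ0 => hmin.exists_mem_vars_le_of_mem hD hQ hQ0⟩

/-- Any two minimal polynomials of a nonzero prime differential ideal `𝔭` of `K{T}` differ by
a nonzero scalar of `K` (in particular they have the same order `n`), and `𝔭` contains no
nonzero differential polynomial of order strictly less than `n`.  Here `K{T}` is realized as
`MvPolynomial ℕ K` with `X i` standing for `T⁽ⁱ⁾`, `D` is the derivation extending `δ` with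
`D (X i) = X (i+1)`, and a minimal polynomial of `𝔭` is an irreducible `P` of order `n` with
`𝔭 = I(P) = {Q | s_P ^ k * Q ∈ (P)_δ for some k}` where `s_P = ∂P/∂X n` is the separant and
`(P)_δ` is the differential ideal generated by `P`. -/
theorem minimal_polynomial_of_prime_differential_ideal_unique
    {K : Type*} [Field K] [CharZero K]
    (δ : K → K)
    (hδadd : ∀ x y, δ (x + y) = δ x + δ y)
    (hδmul : ∀ x y, δ (x * y) = δ x * y + x * δ y)
    (D : MvPolynomial ℕ K → MvPolynomial ℕ K)
    (hDadd : ∀ p q, D (p + q) = D p + D q)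
    (hDmul : ∀ p q, D (p * q) = D p * q + p * D q)
    (hDC : ∀ c : K, D (MvPolynomial.C c) = MvPolynomial.C (δ c))
    (hDX : ∀ i : ℕ, D (MvPolynomial.X i) = MvPolynomial.X (i + 1))
    (𝔭 : Ideal (MvPolynomial ℕ K)) (h𝔭prime : 𝔭.IsPrime) (h𝔭ne : 𝔭 ≠ ⊥)
    (h𝔭diff : ∀ p ∈ 𝔭, D p ∈ 𝔭)
    (P P₁ : MvPolynomial ℕ K) (n n₁ : ℕ)
    (hPirr : Irreducible P) (hP₁irr : Irreducible P₁)
    (hPord : (∀ i ∈ P.vars, i ≤ n) ∧ n ∈ P.vars)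
    (hP₁ord : (∀ i ∈ P₁.vars, i ≤ n₁) ∧ n₁ ∈ P₁.vars)
    (hP : ∀ Q, Q ∈ 𝔭 ↔ ∃ k : ℕ,
      (MvPolynomial.pderiv n P) ^ k * Q ∈ Ideal.span (Set.range fun m => D^[m] P))
    (hP₁ : ∀ Q, Q ∈ 𝔭 ↔ ∃ k : ℕ,
      (MvPolynomial.pderiv n₁ P₁) ^ k * Q ∈ Ideal.span (Set.range fun m => D^[m] P₁)) :
    (∃ c : K, c ≠ 0 ∧ P₁ = MvPolynomial.C c * P) ∧
    n = n₁ ∧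
    ∀ Q ∈ 𝔭, Q ≠ 0 → ∃ i ∈ Q.vars, n ≤ i :=
  minimal_polynomial_of_prime_differential_ideal_unique_general δ D hDadd hDmul hDC hDX 𝔭 P P₁ n n₁
    hPirr hP₁irr hPord hP₁ord hP hP₁
end

section
/- Let k ⊆ K and k ⊆ L be field extensions inside a common field M, with k algebraically closed in the relevant sense that K and L are linearly disjoint over k. Suppose δ is a derivation on K and δ_L is a derivation on L whose restrictions to k coincide. Then there is a unique derivation on the compositum K·L ⊆ M extending both δ and δ_L, and it satisfies δ̃(a·b) = δ(a)·b + a·δ_L(b) for all a ∈ K and b ∈ L. -/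
/-!
A derivation `δ` of a ring is the same thing as a ring homomorphism `x ↦ x + ε δx` into the dual
numbers. Since `δK` and `δL` agree on `k`, their homomorphisms `ιK`, `ιL` into `(K ⊔ L)[ε]` agree
on `k`, and linear disjointness (eliminating one `aⱼ` at a time from a `k`-linear dependence)
shows that every relation `∑ aᵢ bᵢ = 0` in `M` persists as `∑ ιK aᵢ * ιL bᵢ = 0`. So the first
coordinate is injective on the subring `S` generated by the images of `ιK` and `ιL`. Localizing
`S` at its elements with nonzero first coordinate keeps this injectivity and makes the first
coordinate surjective onto the field `K ⊔ L`; the second coordinate of the resulting graph is the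
derivation. It is unique because two derivations agreeing on `K` and `L` give ring homomorphisms
into dual numbers that agree on a generating set of the field `K ⊔ L`.
-/

open Finset TrivSqZeroExt

section LinearDisjoint

variable {M A : Type*} [Field M] [CommRing A] {k K L : Subfield M}

theorem linearIndependent_of_fin_linearDisjoint
    (hdisj : ∀ (n : ℕ) (v : Fin n → M), (∀ i, v i ∈ K) →
      (∀ c : Fin n → M, (∀ i, c i ∈ k) → ∑ i, c i * v i = 0 → ∀ i, c i = 0) →
      ∀ c : Fin n → M, (∀ i, c i ∈ L) → ∑ i, c i * v i = 0 → ∀ i, c i = 0)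
    {ι : Type*} [Fintype ι] {v : ι → M} (hv : ∀ i, v i ∈ K) (h : LinearIndependent k v) :
    LinearIndependent L v := by
  let e := (Fintype.equivFin ι).symm
  have hk := Fintype.linearIndependent_iff.1 ((linearIndependent_equiv e).2 h)
  have hL : LinearIndependent L (v ∘ e) := Fintype.linearIndependent_iff.2 fun g hg i =>
    Subtype.ext <| hdisj _ (v ∘ e) (fun i => hv _)
      (fun c hc hsum i => congrArg Subtype.val (hk (fun i => ⟨c i, hc i⟩) hsum i))
      (fun i => g i) (fun i => (g i).2) hg i
  exact (linearIndependent_equiv e).1 hL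

variable (hkK : k ≤ K) (hkL : k ≤ L) (ιK : K →+* A) (ιL : L →+* A)

theorem sum_map_mul_map_eq_sum_erase
    (hι : ∀ c : k, ιK (Subfield.inclusion hkK c) = ιL (Subfield.inclusion hkL c))
    {ι : Type*} [DecidableEq ι] {a : ι → K} {s : Finset ι} {j : ι}
    (hj : j ∈ s) {t : ι → k} (hrel : a j = ∑ i ∈ s.erase j, Subfield.inclusion hkK (t i) * a i)
    (b : ι → L) :
    ∑ i ∈ s, ιK (a i) * ιL (b i) =
      ∑ i ∈ s.erase j, ιK (a i) * ιL (b i + Subfield.inclusion hkL (t i) * b j) := by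
  rw [← add_sum_erase s _ hj, hrel, map_sum, sum_mul]
  simp only [map_add, map_mul, hι, mul_add, sum_add_distrib]
  rw [add_comm]
  congr 1
  exact sum_congr rfl fun i _ => by ring

theorem sum_map_mul_map_eq_zero_of_sum_mul_eq_zero
    (hι : ∀ c : k, ιK (Subfield.inclusion hkK c) = ιL (Subfield.inclusion hkL c))
    {ι : Type*} (a : ι → K)
    (ha : ∀ s : Finset ι, LinearIndepOn k (fun i => (a i : M)) s →
      LinearIndepOn L (fun i => (a i : M)) s)
    (s : Finset ι) (b : ι → L) (h : ∑ i ∈ s, (a i : M) * b i = 0) :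
    ∑ i ∈ s, ιK (a i) * ιL (b i) = 0 := by
  classical
  induction s using Finset.strongInduction generalizing b with
  | H s ih =>
  by_cases hind : LinearIndepOn k (fun i => (a i : M)) s
  · have hb := linearIndepOn_finset_iff.1 (ha s hind) b
      (by rw [← h]; exact sum_congr rfl fun i _ => mul_comm _ _)
    exact sum_eq_zero fun i hi => by simp [hb i hi]
  · obtain ⟨c, hc, j, hj, hcj⟩ := not_linearIndepOn_finset_iff.1 hind
    have hrel : a j = ∑ i ∈ s.erase j, Subfield.inclusion hkK (-(c j)⁻¹ * c i) * a i := by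
      rw [← add_sum_erase s _ hj] at hc
      change (c j : M) * a j + ∑ i ∈ s.erase j, (c i : M) * a i = 0 at hc
      have hcj' : (c j : M) ≠ 0 := by simpa using hcj
      apply Subtype.ext
      rw [AddSubmonoidClass.coe_finsetSum]
      change (a j : M) = ∑ i ∈ s.erase j, (-(c j : M)⁻¹ * c i) * a i
      simp only [neg_mul, mul_assoc, sum_neg_distrib, ← mul_sum]
      field_simp
      linear_combination hc
    rw [sum_map_mul_map_eq_sum_erase hkK hkL ιK ιL hι hj hrel]
    refine ih _ (erase_ssubset hj) _ ?_
    simpa [h] using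
      (sum_map_mul_map_eq_sum_erase hkK hkL K.subtype L.subtype (fun _ => rfl) hj hrel b).symm

end LinearDisjoint

theorem Subfield.closure_preimage_subtype_sup_eq_top {M : Type*} [Field M] (K L : Subfield M) :
    Subfield.closure ((K ⊔ L).subtype ⁻¹' (K ∪ L)) = ⊤ := by
  refine eq_top_iff.2 fun x _ => ?_
  have hle : K ⊔ L ≤ (Subfield.closure ((K ⊔ L).subtype ⁻¹' (K ∪ L))).map (K ⊔ L).subtype :=
    sup_le
      (fun a ha => ⟨⟨a, (le_sup_left : K ≤ K ⊔ L) ha⟩, Subfield.subset_closure (Or.inl ha), rfl⟩)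
      (fun b hb => ⟨⟨b, (le_sup_right : L ≤ K ⊔ L) hb⟩, Subfield.subset_closure (Or.inr hb), rfl⟩)
  obtain ⟨y, hy, hyx⟩ := hle x.2
  rwa [Subtype.ext hyx] at hy

section DualNumber

variable {A B F : Type*} [CommRing A] [CommRing B] [Field F]

def ringHomDualNumber (f : A →+* B) (δ : A → A) (hadd : ∀ x y, δ (x + y) = δ x + δ y)
    (hmul : ∀ x y, δ (x * y) = δ x * y + x * δ y) : A →+* DualNumber B where
  toFun x := inl (f x) + inr (f (δ x))
  map_zero' := by
    have h0 : δ 0 = 0 := by simpa using hadd 0 0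
    ext <;> simp [h0]
  map_one' := by
    have h1 : δ 1 = 0 := by simpa using hmul 1 1
    ext <;> simp [h1]
  map_add' x y := by ext <;> simp [hadd]
  map_mul' x y := by
    ext
    · simp
    · simp [hmul]
      ring

@[simp]
theorem fst_ringHomDualNumber (f : A →+* B) (δ : A → A) (hadd hmul) (x : A) :
    fst (ringHomDualNumber f δ hadd hmul x) = f x := by
  simp [ringHomDualNumber]

@[simp]
theorem snd_ringHomDualNumber (f : A →+* B) (δ : A → A) (hadd hmul) (x : A) :
    snd (ringHomDualNumber f δ hadd hmul x) = f (δ x) := by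
  simp [ringHomDualNumber]

theorem leibniz_ext {s : Set F} (hs : Subfield.closure s = ⊤) {D₁ D₂ : F → F}
    (hadd₁ : ∀ x y, D₁ (x + y) = D₁ x + D₁ y) (hmul₁ : ∀ x y, D₁ (x * y) = D₁ x * y + x * D₁ y)
    (hadd₂ : ∀ x y, D₂ (x + y) = D₂ x + D₂ y) (hmul₂ : ∀ x y, D₂ (x * y) = D₂ x * y + x * D₂ y)
    (h : Set.EqOn D₁ D₂ s) : D₁ = D₂ := by
  have := RingHom.eq_of_eqOn_of_field_closure_eq_top hs
    (f := ringHomDualNumber (RingHom.id F) D₁ hadd₁ hmul₁)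
    (g := ringHomDualNumber (RingHom.id F) D₂ hadd₂ hmul₂) fun x hx => by ext <;> simp [h hx]
  funext x
  simpa using congrArg snd (RingHom.congr_fun this x)

theorem exists_leibniz_of_graph (G : Subring (DualNumber A))
    (hG : ∀ g ∈ G, fst g = 0 → g = 0) (hsurj : ∀ x, ∃ g ∈ G, fst g = x) :
    ∃ D : A → A, (∀ x y, D (x + y) = D x + D y) ∧ (∀ x y, D (x * y) = D x * y + x * D y) ∧
      ∀ g ∈ G, D (fst g) = snd g := by
  choose σ hσG hσ using hsurj
  have hgraph : ∀ g ∈ G, σ (fst g) = g := fun g hg =>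
    sub_eq_zero.1 (hG _ (sub_mem (hσG _) hg) (by simp [hσ]))
  refine ⟨fun x => snd (σ x), fun x y => ?_, fun x y => ?_, fun g hg => by simp only [hgraph g hg]⟩
  · have := hgraph _ (add_mem (hσG x) (hσG y))
    simp only [fst_add, hσ] at this
    simp only [this, snd_add]
  · have := hgraph _ (mul_mem (hσG x) (hσG y))
    simp only [fst_mul, hσ] at this
    simp only [this, snd_mul, hσ, smul_eq_mul, op_smul_eq_mul]
    ring

/-- The localization of `S` at its elements with nonzero `fst`, inside `F[ε]`. -/
def fracSubring (S : Subring (DualNumber F)) : Subring (DualNumber F) where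
  carrier := {g | ∃ t ∈ S, fst t ≠ 0 ∧ g * t ∈ S}
  zero_mem' := ⟨1, S.one_mem, by simp, by simp⟩
  one_mem' := ⟨1, S.one_mem, by simp, by simp⟩
  add_mem' := by
    rintro g g' ⟨t, ht, ht0, hgt⟩ ⟨t', ht', ht0', hgt'⟩
    refine ⟨t * t', S.mul_mem ht ht', by simp [ht0, ht0'], ?_⟩
    rw [show (g + g') * (t * t') = g * t * t' + g' * t' * t by ring]
    exact S.add_mem (S.mul_mem hgt ht') (S.mul_mem hgt' ht)
  mul_mem' := by
    rintro g g' ⟨t, ht, ht0, hgt⟩ ⟨t', ht', ht0', hgt'⟩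
    refine ⟨t * t', S.mul_mem ht ht', by simp [ht0, ht0'], ?_⟩
    rw [show g * g' * (t * t') = g * t * (g' * t') by ring]
    exact S.mul_mem hgt hgt'
  neg_mem' := by
    rintro g ⟨t, ht, ht0, hgt⟩
    exact ⟨t, ht, ht0, by simpa using S.neg_mem hgt⟩

variable {S : Subring (DualNumber F)}

theorem le_fracSubring : S ≤ fracSubring S := fun z hz => ⟨1, S.one_mem, by simp, by simpa⟩

theorem inv_mem_fracSubring {g : DualNumber F} (hg : g ∈ fracSubring S) : g⁻¹ ∈ fracSubring S := by
  obtain ⟨t, ht, ht0, hgt⟩ := hg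
  by_cases hg0 : fst g = 0
  · have : g⁻¹ = 0 := by ext <;> simp [hg0]
    rw [this]
    exact zero_mem _
  · refine ⟨g * t, hgt, by simp [hg0, ht0], ?_⟩
    rwa [← mul_assoc, TrivSqZeroExt.inv_mul_cancel hg0, one_mul]

theorem eq_zero_of_mem_fracSubring (hS : ∀ z ∈ S, fst z = 0 → z = 0) {g : DualNumber F}
    (hg : g ∈ fracSubring S) (hg0 : fst g = 0) : g = 0 := by
  obtain ⟨t, ht, ht0, hgt⟩ := hg
  have : g * t = 0 := hS _ hgt (by simp [hg0])
  simpa [mul_assoc, TrivSqZeroExt.mul_inv_cancel ht0] using congrArg (· * t⁻¹) this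

theorem exists_mem_fracSubring_fst_eq {s : Set F} (hs : Subfield.closure s = ⊤)
    (hsS : ∀ x ∈ s, ∃ z ∈ S, fst z = x) (x : F) : ∃ g ∈ fracSubring S, fst g = x := by
  let E : Subfield F :=
    { (fracSubring S).map (fstHom ℤ F F).toRingHom with
      inv_mem' := by
        rintro _ ⟨g, hg, rfl⟩
        exact ⟨g⁻¹, inv_mem_fracSubring hg, by simp⟩ }
  have hsE : Subfield.closure s ≤ E := Subfield.closure_le.2 fun y hy => by
    obtain ⟨z, hz, rfl⟩ := hsS y hy
    exact ⟨z, le_fracSubring hz, rfl⟩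
  rw [hs] at hsE
  obtain ⟨g, hg, rfl⟩ := hsE (Subfield.mem_top x)
  exact ⟨g, hg, rfl⟩

end DualNumber

theorem exists_leibniz_sup {M : Type*} [Field M] {k K L : Subfield M} (hkK : k ≤ K) (hkL : k ≤ L)
    (ιK : K →+* DualNumber (K ⊔ L : Subfield M)) (ιL : L →+* DualNumber (K ⊔ L : Subfield M))
    (hι : ∀ c : k, ιK (Subfield.inclusion hkK c) = ιL (Subfield.inclusion hkL c))
    (hfstK : ∀ a, fst (ιK a) = Subfield.inclusion le_sup_left a)
    (hfstL : ∀ b, fst (ιL b) = Subfield.inclusion le_sup_right b)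
    (hdisj : ∀ s : Finset (K × L), LinearIndepOn k (fun p : K × L => (p.1 : M)) s →
      LinearIndepOn L (fun p : K × L => (p.1 : M)) s) :
    ∃ D : (K ⊔ L : Subfield M) → (K ⊔ L : Subfield M),
      (∀ x y, D (x + y) = D x + D y) ∧ (∀ x y, D (x * y) = D x * y + x * D y) ∧
      (∀ a, D (Subfield.inclusion le_sup_left a) = snd (ιK a)) ∧
      ∀ b, D (Subfield.inclusion le_sup_right b) = snd (ιL b) := by
  let ν := Algebra.TensorProduct.productMap ιK.toIntAlgHom ιL.toIntAlgHom
  let S := ν.range.toSubring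
  have hν : ∀ w, fst (ν w) = 0 → ν w = 0 := by
    intro w hw
    obtain ⟨s, rfl⟩ := TensorProduct.exists_finset w
    simp only [ν, map_sum, Algebra.TensorProduct.productMap_apply_tmul,
      RingHom.toIntAlgHom_apply, fst_sum, fst_mul, hfstK, hfstL] at hw ⊢
    refine sum_map_mul_map_eq_zero_of_sum_mul_eq_zero hkK hkL ιK ιL hι Prod.fst hdisj s Prod.snd ?_
    have := congrArg Subtype.val hw
    rw [AddSubmonoidClass.coe_finsetSum] at this
    exact this
  have hS : ∀ z ∈ S, fst z = 0 → z = 0 := by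
    rintro _ ⟨w, rfl⟩
    exact hν w
  have hK : ∀ a, ιK a ∈ S := fun a => ⟨a ⊗ₜ 1, by simp [ν]⟩
  have hL : ∀ b, ιL b ∈ S := fun b => ⟨1 ⊗ₜ b, by simp [ν]⟩
  have hgen : ∀ x ∈ (K ⊔ L).subtype ⁻¹' (K ∪ L), ∃ z ∈ S, fst z = x := by
    rintro x (hx | hx)
    · exact ⟨ιK ⟨x, hx⟩, hK _, hfstK _⟩
    · exact ⟨ιL ⟨x, hx⟩, hL _, hfstL _⟩
  obtain ⟨D, hadd, hmul, hD⟩ := exists_leibniz_of_graph (fracSubring S)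
    (fun g => eq_zero_of_mem_fracSubring hS)
    (exists_mem_fracSubring_fst_eq (Subfield.closure_preimage_subtype_sup_eq_top K L) hgen)
  exact ⟨D, hadd, hmul, fun a => by simpa [hfstK] using hD _ (le_fracSubring (hK a)),
    fun b => by simpa [hfstL] using hD _ (le_fracSubring (hL b))⟩

/-- If `K` and `L` are linearly disjoint over a common subfield `k` inside `M`, and `δK`,
`δL` are derivations on `K` and `L` agreeing on `k`, then there is a unique derivation on the
compositum `K ⊔ L` extending both, and it satisfies the product rule
`D(a·b) = δK(a)·b + a·δL(b)` for `a ∈ K`, `b ∈ L`. -/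
theorem derivation_on_compositum_of_linearly_disjoint
    {M : Type*} [Field M]
    (k K L : Subfield M) (hkK : k ≤ K) (hkL : k ≤ L)
    (hdisj : ∀ (n : ℕ) (v : Fin n → M), (∀ i, v i ∈ K) →
      (∀ c : Fin n → M, (∀ i, c i ∈ k) → ∑ i, c i * v i = 0 → ∀ i, c i = 0) →
      ∀ c : Fin n → M, (∀ i, c i ∈ L) → ∑ i, c i * v i = 0 → ∀ i, c i = 0)
    (δK : K → K)
    (hKadd : ∀ x y, δK (x + y) = δK x + δK y)
    (hKmul : ∀ x y, δK (x * y) = δK x * y + x * δK y)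
    (δL : L → L)
    (hLadd : ∀ x y, δL (x + y) = δL x + δL y)
    (hLmul : ∀ x y, δL (x * y) = δL x * y + x * δL y)
    (hcompat : ∀ (x : M) (hx : x ∈ k),
      (δK ⟨x, hkK hx⟩ : M) = (δL ⟨x, hkL hx⟩ : M)) :
    ∃! D : (K ⊔ L : Subfield M) → (K ⊔ L : Subfield M),
      (∀ x y, D (x + y) = D x + D y) ∧
      (∀ x y, D (x * y) = D x * y + x * D y) ∧
      (∀ (x : M) (hx : x ∈ K),
        (D ⟨x, by exact (le_sup_left : K ≤ K ⊔ L) hx⟩ : M) = δK ⟨x, hx⟩) ∧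
      (∀ (x : M) (hx : x ∈ L),
        (D ⟨x, by exact (le_sup_right : L ≤ K ⊔ L) hx⟩ : M) = δL ⟨x, hx⟩) ∧
      (∀ (a : M) (ha : a ∈ K) (b : M) (hb : b ∈ L),
        (D ⟨a * b, by
            exact mul_mem ((le_sup_left : K ≤ K ⊔ L) ha)
              ((le_sup_right : L ≤ K ⊔ L) hb)⟩ : M) =
          (δK ⟨a, ha⟩ : M) * b + a * (δL ⟨b, hb⟩ : M)) := by
  let ιK := ringHomDualNumber (Subfield.inclusion (le_sup_left : K ≤ K ⊔ L)) δK hKadd hKmul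
  let ιL := ringHomDualNumber (Subfield.inclusion (le_sup_right : L ≤ K ⊔ L)) δL hLadd hLmul
  have hι : ∀ c : k, ιK (Subfield.inclusion hkK c) = ιL (Subfield.inclusion hkL c) := fun c => by
    ext
    · rfl
    · simp only [ιK, ιL, snd_ringHomDualNumber]
      exact hcompat c c.2
  obtain ⟨D, hadd, hmul, hDK, hDL⟩ := exists_leibniz_sup hkK hkL ιK ιL hι
    (fun _ => fst_ringHomDualNumber ..) (fun _ => fst_ringHomDualNumber ..)
    (fun _ => linearIndependent_of_fin_linearDisjoint hdisj fun p => p.1.1.2)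
  have hK : ∀ x (hx : x ∈ K), (D ⟨x, (le_sup_left : K ≤ K ⊔ L) hx⟩ : M) = δK ⟨x, hx⟩ :=
    fun x hx => congrArg Subtype.val ((hDK ⟨x, hx⟩).trans (snd_ringHomDualNumber ..))
  have hL : ∀ x (hx : x ∈ L), (D ⟨x, (le_sup_right : L ≤ K ⊔ L) hx⟩ : M) = δL ⟨x, hx⟩ :=
    fun x hx => congrArg Subtype.val ((hDL ⟨x, hx⟩).trans (snd_ringHomDualNumber ..))
  refine ⟨D, ⟨hadd, hmul, hK, hL, fun a ha b hb => ?_⟩, fun D' ⟨hadd', hmul', hK', hL', _⟩ => ?_⟩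
  · rw [← hK a ha, ← hL b hb]
    exact congrArg Subtype.val (hmul ⟨a, _⟩ ⟨b, _⟩)
  · refine leibniz_ext (Subfield.closure_preimage_subtype_sup_eq_top K L) hadd' hmul' hadd hmul ?_
    rintro x (hx | hx)
    · exact Subtype.ext ((hK' x hx).trans (hK x hx).symm)
    · exact Subtype.ext ((hL' x hx).trans (hL x hx).symm)
end
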